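/- arXiv:2303.04683 — 3 statements merged into one kernel-verified Lean document; each statement's English description precedes it below -/
import Mathlib

section
/- If f : ℝ → ℝ is concave and nondecreasing on (0,∞), and r(p,B) = B * log2(1 + g*p/(σ²*B)) with g, σ² > 0, then the composition (p,B) ↦ f(r(p,B) - r_e) is jointly concave on the set where B > 0, p ≥ 0, and r(p,B) > r_e, for any constant r_e ≥ 0. -/
/-!
The rate `r(p, B) = B log₂(1 + (g/σ²)(p/B))` is the perspective of the concave function
`u ↦ log₂(1 + (g/σ²) u)`, hence jointly concave. Its strict superlevel set `{r > r_e}` is then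
convex, and composing the concave `r - r_e` with the concave nondecreasing `f` preserves concavity.
-/

open Set Real

theorem ConcaveOn.comp_of_mapsTo {𝕜 E α β : Type*} [Semiring 𝕜] [PartialOrder 𝕜]
    [AddCommMonoid E] [SMul 𝕜 E] [AddCommMonoid α] [PartialOrder α] [SMul 𝕜 α]
    [AddCommMonoid β] [PartialOrder β] [SMul 𝕜 β] {s : Set E} {t : Set β} {f : E → β}
    {g : β → α} (hg : ConcaveOn 𝕜 t g) (hf : ConcaveOn 𝕜 s f) (hg' : MonotoneOn g t)
    (hst : MapsTo f s t) : ConcaveOn 𝕜 s (g ∘ f) :=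
  ⟨hf.1, fun _ hx _ hy _ _ ha hb hab =>
    (hg.2 (hst hx) (hst hy) ha hb hab).trans <|
      hg' (hg.1 (hst hx) (hst hy) ha hb hab) (hst <| hf.1 hx hy ha hb hab) <|
        hf.2 hx hy ha hb hab⟩

theorem concaveOn_logb_one_add_mul {b c : ℝ} (hb : 1 < b) (hc : 0 ≤ c) :
    ConcaveOn ℝ (Ici 0) fun u => logb b (1 + c * u) := by
  let φ : ℝ →ᵃ[ℝ] ℝ := AffineMap.const ℝ ℝ (1 : ℝ) + c • AffineMap.id ℝ ℝ
  have hlog := (strictConcaveOn_log_Ioi.concaveOn.comp_affineMap φ).smul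
    (inv_nonneg.2 (log_pos hb).le)
  refine (hlog.subset (fun u (hu : 0 ≤ u) => ?_) (convex_Ici 0)).congr fun u _ => ?_
  · change 0 < 1 + c * u
    positivity
  · simp [φ, logb, div_eq_inv_mul]

theorem ConcaveOn.perspective {s : Set ℝ} {φ : ℝ → ℝ} (hφ : ConcaveOn ℝ s φ) :
    ConcaveOn ℝ {x : ℝ × ℝ | 0 < x.2 ∧ x.1 / x.2 ∈ s} fun x => x.2 * φ (x.1 / x.2) := by
  set D := {x : ℝ × ℝ | 0 < x.2 ∧ x.1 / x.2 ∈ s}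
  set F := fun x : ℝ × ℝ => x.2 * φ (x.1 / x.2)
  suffices key : ∀ x ∈ D, ∀ y ∈ D, ∀ ⦃a b : ℝ⦄, 0 ≤ a → 0 ≤ b → a + b = 1 →
      a • x + b • y ∈ D ∧ a • F x + b • F y ≤ F (a • x + b • y) from
    ⟨fun x hx y hy a b ha hb hab => (key x hx y hy ha hb hab).1,
      fun x hx y hy a b ha hb hab => (key x hx y hy ha hb hab).2⟩
  rintro ⟨p₁, B₁⟩ ⟨hB₁, hs₁⟩ ⟨p₂, B₂⟩ ⟨hB₂, hs₂⟩ a b ha hb hab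
  simp only [D, F, mem_ofPred_eq, Prod.smul_mk, Prod.mk_add_mk, smul_eq_mul] at hs₁ hs₂ hB₁ hB₂ ⊢
  set B := a * B₁ + b * B₂
  have hB : 0 < B := by
    rcases ha.eq_or_lt with rfl | ha
    · simp_all [B]
    · positivity
  have hw : a * B₁ / B + b * B₂ / B = 1 := by rw [← add_div, div_self hB.ne']
  have hmix : (a * p₁ + b * p₂) / B = a * B₁ / B * (p₁ / B₁) + b * B₂ / B * (p₂ / B₂) := by
    field_simp
  have hw₁ : 0 ≤ a * B₁ / B := by positivity
  have hw₂ : 0 ≤ b * B₂ / B := by positivity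
  refine ⟨⟨hB, hmix ▸ hφ.1 hs₁ hs₂ hw₁ hw₂ hw⟩, ?_⟩
  calc a * (B₁ * φ (p₁ / B₁)) + b * (B₂ * φ (p₂ / B₂))
      = B * (a * B₁ / B * φ (p₁ / B₁) + b * B₂ / B * φ (p₂ / B₂)) := by field_simp
    _ ≤ B * φ ((a * p₁ + b * p₂) / B) := by
      rw [hmix]
      exact mul_le_mul_of_nonneg_left (hφ.2 hs₁ hs₂ hw₁ hw₂ hw) hB.le

theorem stmt_1_general (g σ2 re : ℝ) (hg : 0 < g) (hσ : 0 < σ2)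
    (f : ℝ → ℝ)
    (hconc : ConcaveOn ℝ (Set.Ioi 0) f)
    (hmono : MonotoneOn f (Set.Ioi 0)) :
    ConcaveOn ℝ
      {pb : ℝ × ℝ | 0 < pb.2 ∧ 0 ≤ pb.1 ∧
        re < pb.2 * Real.logb 2 (1 + g * pb.1 / (σ2 * pb.2))}
      (fun pb => f (pb.2 * Real.logb 2 (1 + g * pb.1 / (σ2 * pb.2)) - re)) := by
  set r := fun pb : ℝ × ℝ => pb.2 * logb 2 (1 + g * pb.1 / (σ2 * pb.2))
  have hr : ConcaveOn ℝ {pb : ℝ × ℝ | 0 < pb.2 ∧ pb.1 / pb.2 ∈ Ici 0} r := by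
    convert (concaveOn_logb_one_add_mul one_lt_two (div_nonneg hg.le hσ.le)).perspective
      using 4 with pb
    rw [div_mul_div_comm]
  have hdom : {pb : ℝ × ℝ | 0 < pb.2 ∧ 0 ≤ pb.1 ∧ re < r pb} =
      {pb ∈ {pb : ℝ × ℝ | 0 < pb.2 ∧ pb.1 / pb.2 ∈ Ici 0} | re < r pb} := by
    ext pb
    simp only [mem_ofPred_eq, mem_Ici, and_assoc]
    exact and_congr_right fun hB => and_congr_left' (by rw [le_div_iff₀ hB, zero_mul])
  rw [hdom]
  have hr' := (hr.subset (sep_subset _ _) (hr.convex_gt re)).add_const (-re)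
  exact hconc.comp_of_mapsTo hr' hmono fun pb hpb => by simpa [sub_eq_add_neg] using hpb.2

/-- If f is concave and nondecreasing on (0,∞), then (p,B) ↦ f(r(p,B) - r_e)
is jointly concave on {B > 0, p ≥ 0, r(p,B) > r_e}. -/
theorem stmt_1 (g σ2 re : ℝ) (hg : 0 < g) (hσ : 0 < σ2) (hre : 0 ≤ re)
    (f : ℝ → ℝ)
    (hconc : ConcaveOn ℝ (Set.Ioi 0) f)
    (hmono : MonotoneOn f (Set.Ioi 0)) :
    ConcaveOn ℝ
      {pb : ℝ × ℝ | 0 < pb.2 ∧ 0 ≤ pb.1 ∧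
        re < pb.2 * Real.logb 2 (1 + g * pb.1 / (σ2 * pb.2))}
      (fun pb => f (pb.2 * Real.logb 2 (1 + g * pb.1 / (σ2 * pb.2)) - re)) :=
  stmt_1_general g σ2 re hg hσ f hconc hmono
end

section
/- Let N : ℝ → ℝ be nonnegative, concave, and differentiable on a convex open set S ⊆ ℝⁿ, and let D : S → ℝ be positive, convex, and differentiable. Then the ratio φ(x) = N(x)/D(x) is pseudoconcave on S: for all x₁, x₂ ∈ S, if φ(x₁) < φ(x₂) then ∇φ(x₁) · (x₂ - x₁) > 0. -/
/-!
The gradient inequalities give `N x₂ - N x₁ ≤ a` and `b ≤ D x₂ - D x₁` for the directional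
derivatives `a`, `b` of `N`, `D` at `x₁` along `x₂ - x₁`. By the quotient rule the directional
derivative of `N / D` has the sign of `a D x₁ - N x₁ b`, and since `N x₁ ≥ 0` and `D x₁ > 0` this is
at least `N x₂ D x₁ - N x₁ D x₂`, which is positive exactly when `N x₁ / D x₁ < N x₂ / D x₂`.
-/

theorem fderiv_div_apply {𝕜 E : Type*} [NontriviallyNormedField 𝕜] [NormedAddCommGroup E]
    [NormedSpace 𝕜 E] {c d : E → 𝕜} {x : E} (hc : DifferentiableAt 𝕜 c x)
    (hd : DifferentiableAt 𝕜 d x) (hx : d x ≠ 0) (v : E) :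
    fderiv 𝕜 (fun y => c y / d y) x v
      = (fderiv 𝕜 c x v * d x - c x * fderiv 𝕜 d x v) / d x ^ 2 := by
  have hinv := (hasDerivAt_inv hx).comp_hasFDerivAt x hd.hasFDerivAt
  have hdiv : HasFDerivAt (fun y => c y / d y)
      (c x • (-(d x ^ 2)⁻¹ • fderiv 𝕜 d x) + (d x)⁻¹ • fderiv 𝕜 c x) x := by
    simpa only [div_eq_mul_inv, Function.comp_def, Pi.mul_def] using hc.hasFDerivAt.mul hinv
  rw [hdiv.fderiv]
  simp only [add_apply, smul_apply, smul_eq_mul]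
  field_simp
  ring

section GradientInequality

variable {E : Type*} [NormedAddCommGroup E] [NormedSpace ℝ E] {s : Set E} {f : E → ℝ} {x y : E}

theorem ConvexOn.fderiv_apply_sub_le (hf : ConvexOn ℝ s f) (hx : x ∈ s) (hy : y ∈ s)
    (hfx : DifferentiableAt ℝ f x) : fderiv ℝ f x (y - x) ≤ f y - f x := by
  have hline : HasDerivAt (f ∘ AffineMap.lineMap x y) (fderiv ℝ f x (y - x)) (0 : ℝ) := by
    refine HasFDerivAt.comp_hasDerivAt _ ?_ AffineMap.hasDerivAt_lineMap
    simpa using hfx.hasFDerivAt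
  simpa [slope] using (hf.comp_affineMap (AffineMap.lineMap x y)).le_slope_of_hasDerivAt
    (by simpa using hx) (by simpa using hy) one_pos hline

theorem ConcaveOn.sub_le_fderiv_apply_sub (hf : ConcaveOn ℝ s f) (hx : x ∈ s) (hy : y ∈ s)
    (hfx : DifferentiableAt ℝ f x) : f y - f x ≤ fderiv ℝ f x (y - x) := by
  have := hf.neg.fderiv_apply_sub_le hx hy hfx.neg
  simp only [fderiv_neg, neg_apply, Pi.neg_apply] at this
  linarith

end GradientInequality

theorem stmt_2_general {n : ℕ} (S : Set (EuclideanSpace ℝ (Fin n)))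
    (N D : EuclideanSpace ℝ (Fin n) → ℝ)
    (hN0 : ∀ x ∈ S, 0 ≤ N x) (hNconc : ConcaveOn ℝ S N)
    (hNdiff : ∀ x ∈ S, DifferentiableAt ℝ N x)
    (hD0 : ∀ x ∈ S, 0 < D x) (hDconv : ConvexOn ℝ S D)
    (hDdiff : ∀ x ∈ S, DifferentiableAt ℝ D x) :
    ∀ x₁ ∈ S, ∀ x₂ ∈ S, N x₁ / D x₁ < N x₂ / D x₂ →
      0 < fderiv ℝ (fun x => N x / D x) x₁ (x₂ - x₁) := by
  intro x₁ hx₁ x₂ hx₂ hlt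
  have hD₁ := hD0 x₁ hx₁
  have hcross : N x₁ * D x₂ < N x₂ * D x₁ := (div_lt_div_iff₀ hD₁ (hD0 x₂ hx₂)).mp hlt
  have hN := hNconc.sub_le_fderiv_apply_sub hx₁ hx₂ (hNdiff x₁ hx₁)
  have hD := hDconv.fderiv_apply_sub_le hx₁ hx₂ (hDdiff x₁ hx₁)
  rw [fderiv_div_apply (hNdiff x₁ hx₁) (hDdiff x₁ hx₁) hD₁.ne']
  refine div_pos ?_ (by positivity)
  nlinarith [mul_le_mul_of_nonneg_left hD (hN0 x₁ hx₁), mul_le_mul_of_nonneg_left hN hD₁.le]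

/-- A nonnegative concave differentiable numerator over a positive convex
differentiable denominator is pseudoconcave on a convex open set. -/
theorem stmt_2 {n : ℕ} (S : Set (EuclideanSpace ℝ (Fin n)))
    (hS : Convex ℝ S) (hSopen : IsOpen S)
    (N D : EuclideanSpace ℝ (Fin n) → ℝ)
    (hN0 : ∀ x ∈ S, 0 ≤ N x) (hNconc : ConcaveOn ℝ S N)
    (hNdiff : ∀ x ∈ S, DifferentiableAt ℝ N x)
    (hD0 : ∀ x ∈ S, 0 < D x) (hDconv : ConvexOn ℝ S D)
    (hDdiff : ∀ x ∈ S, DifferentiableAt ℝ D x) :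
    ∀ x₁ ∈ S, ∀ x₂ ∈ S, N x₁ / D x₁ < N x₂ / D x₂ →
      0 < fderiv ℝ (fun x => N x / D x) x₁ (x₂ - x₁) :=
  stmt_2_general S N D hN0 hNconc hNdiff hD0 hDconv hDdiff
end

section
/- For constants a > 0, b > 0 with a/b > 0, the equation ((log2(1+θ) - θ/((1+θ) ln 2)) * b) / (a/((1+θ) ln 2)) = λ in the unknown θ > 0, for λ > 0, has the unique solution θ = exp(1 + W((1/e)*(a*λ/b - 1))) - 1, where W is the principal branch of the Lambert W function, provided a*λ/b ≥ 0. -/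
/-!
Substituting `t = 1 + θ` and `x = log t - 1`, the equation becomes `t log t - t + 1 = c` with
`c = a λ / b`, i.e. `x eˣ = (c - 1) / e`. Since `θ > 0` forces `x > -1`, the principal branch
gives `x = W((c - 1) / e)`, and `θ = e^{1 + x} - 1`.
-/

open Real

lemma rate_equation_iff {a b lam θ : ℝ} (ha : a ≠ 0) (hb : b ≠ 0) (hθ : 1 + θ ≠ 0) :
    ((logb 2 (1 + θ) - θ / ((1 + θ) * log 2)) * b) / (a / ((1 + θ) * log 2)) = lam ↔
      (1 + θ) * log (1 + θ) - θ = a * lam / b := by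
  have hlog2 : log 2 ≠ 0 := (log_pos one_lt_two).ne'
  rw [logb, div_eq_iff (by positivity), eq_div_iff hb]
  constructor <;> intro h <;> field_simp at h ⊢ <;> linear_combination h

lemma mul_log_sub_exp_one_add {w c : ℝ} (hw : w * exp w = 1 / exp 1 * (c - 1)) :
    (1 + (exp (1 + w) - 1)) * log (1 + (exp (1 + w) - 1)) - (exp (1 + w) - 1) = c := by
  have hexp : exp (1 + w) = exp 1 * exp w := exp_add 1 w
  have hc : exp 1 * (1 / exp 1 * (c - 1)) = c - 1 := by field_simp
  rw [add_sub_cancel, log_exp]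
  linear_combination w * hexp + exp 1 * hw + hc

lemma log_sub_one_mul_exp {θ c : ℝ} (hθ : 0 < 1 + θ) (h : (1 + θ) * log (1 + θ) - θ = c) :
    (log (1 + θ) - 1) * exp (log (1 + θ) - 1) = 1 / exp 1 * (c - 1) := by
  rw [exp_sub, exp_log hθ, ← h]
  field_simp
  ring

lemma eq_exp_one_add_of_mul_log_sub {W : ℝ → ℝ}
    (hWuniq : ∀ z x : ℝ, -1 ≤ x → x * exp x = z → W z = x) {θ c : ℝ} (hθ : 0 ≤ θ)
    (h : (1 + θ) * log (1 + θ) - θ = c) :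
    θ = exp (1 + W (1 / exp 1 * (c - 1))) - 1 := by
  have hθ1 : 0 < 1 + θ := by linarith
  have hx : -1 ≤ log (1 + θ) - 1 := by linarith [log_nonneg (by linarith : (1 : ℝ) ≤ 1 + θ)]
  rw [hWuniq _ _ hx (log_sub_one_mul_exp hθ1 h), add_sub_cancel, exp_log hθ1]
  ring

theorem stmt_8_general (W : ℝ → ℝ)
    (hW : ∀ z : ℝ, -(Real.exp 1)⁻¹ ≤ z →
      (-1 ≤ W z ∧ W z * Real.exp (W z) = z))
    (hWuniq : ∀ z x : ℝ, -1 ≤ x → x * Real.exp x = z → W z = x)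
    (a b lam : ℝ) (ha : 0 < a) (hb : 0 < b) (hlam : 0 < lam) :
    0 < Real.exp (1 + W ((1 / Real.exp 1) * (a * lam / b - 1))) - 1 ∧
    (((Real.logb 2 (1 + (Real.exp (1 + W ((1 / Real.exp 1) * (a * lam / b - 1))) - 1)) -
        (Real.exp (1 + W ((1 / Real.exp 1) * (a * lam / b - 1))) - 1) /
          ((1 + (Real.exp (1 + W ((1 / Real.exp 1) * (a * lam / b - 1))) - 1)) * Real.log 2)) * b) /
      (a / ((1 + (Real.exp (1 + W ((1 / Real.exp 1) * (a * lam / b - 1))) - 1)) * Real.log 2)) = lam) ∧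
    (∀ θ : ℝ, 0 < θ →
      ((Real.logb 2 (1 + θ) - θ / ((1 + θ) * Real.log 2)) * b) /
        (a / ((1 + θ) * Real.log 2)) = lam →
      θ = Real.exp (1 + W ((1 / Real.exp 1) * (a * lam / b - 1))) - 1) := by
  set c := a * lam / b
  have hc : 0 < c := by positivity
  have hz : -(exp 1)⁻¹ ≤ 1 / exp 1 * (c - 1) := by
    rw [one_div, mul_sub, mul_one]
    linarith [mul_pos (inv_pos.2 (exp_pos 1)) hc]
  obtain ⟨hw, hwe⟩ := hW _ hz
  set θ₀ := exp (1 + W (1 / exp 1 * (c - 1))) - 1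
  have hsol : (1 + θ₀) * log (1 + θ₀) - θ₀ = c := mul_log_sub_exp_one_add hwe
  have hθ₀ : 0 < θ₀ := by
    have hnonneg : 0 ≤ θ₀ := by linarith [add_one_le_exp (1 + W (1 / exp 1 * (c - 1)))]
    refine hnonneg.lt_of_ne fun hzero => hc.ne' ?_
    rw [← hsol, ← hzero]
    simp
  refine ⟨hθ₀, (rate_equation_iff ha.ne' hb.ne' (by linarith)).2 hsol, fun θ hθ heq => ?_⟩
  exact eq_exp_one_add_of_mul_log_sub hWuniq hθ.le
    ((rate_equation_iff ha.ne' hb.ne' (by linarith)).1 heq)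

/-- For a, b > 0 and λ > 0 with a λ / b ≥ 0, the equation
((log2(1+θ) - θ/((1+θ) ln 2))·b) / (a/((1+θ) ln 2)) = λ in θ > 0 has the
unique solution θ = exp(1 + W((1/e)(a λ/b − 1))) − 1, where W is the
principal branch of the Lambert W function. -/
theorem stmt_8 (W : ℝ → ℝ)
    (hW : ∀ z : ℝ, -(Real.exp 1)⁻¹ ≤ z →
      (-1 ≤ W z ∧ W z * Real.exp (W z) = z))
    (hWuniq : ∀ z x : ℝ, -1 ≤ x → x * Real.exp x = z → W z = x)
    (a b lam : ℝ) (ha : 0 < a) (hb : 0 < b) (hlam : 0 < lam)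
    (h : 0 ≤ a * lam / b) :
    0 < Real.exp (1 + W ((1 / Real.exp 1) * (a * lam / b - 1))) - 1 ∧
    (((Real.logb 2 (1 + (Real.exp (1 + W ((1 / Real.exp 1) * (a * lam / b - 1))) - 1)) -
        (Real.exp (1 + W ((1 / Real.exp 1) * (a * lam / b - 1))) - 1) /
          ((1 + (Real.exp (1 + W ((1 / Real.exp 1) * (a * lam / b - 1))) - 1)) * Real.log 2)) * b) /
      (a / ((1 + (Real.exp (1 + W ((1 / Real.exp 1) * (a * lam / b - 1))) - 1)) * Real.log 2)) = lam) ∧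
    (∀ θ : ℝ, 0 < θ →
      ((Real.logb 2 (1 + θ) - θ / ((1 + θ) * Real.log 2)) * b) /
        (a / ((1 + θ) * Real.log 2)) = lam →
      θ = Real.exp (1 + W ((1 / Real.exp 1) * (a * lam / b - 1))) - 1) :=
  stmt_8_general W hW hWuniq a b lam ha hb hlam
end
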